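/- arXiv:1701.02964 — 2 statements merged into one kernel-verified Lean document; each statement's English description precedes it below -/
import Mathlib

section
/- Let k ≥ 2 and let F : ℍ → ℂ be holomorphic on the upper half-plane ℍ, and let V = [[a,b],[c,d]] ∈ SL₂(ℝ) with cz + d ≠ 0 for the given z ∈ ℍ. Writing D = (1/(2πi)) d/dz, Bol's identity holds: (D^{k−1}F)(Vz)/(cz+d)^k = D^{k−1}[ (cz+d)^{k−2} F(Vz) ], where Vz = (az+b)/(cz+d). -/
/-!
Write `u(w) = cw + d` and `V w = (aw + b)/(cw + d)`, so that `V' = 1/u²` when `ad - bc = 1`.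
With `h = u^m · (G ∘ V)`, the claim `h^(m+1) = (G^(m+1) ∘ V)/u^(m+2)` is proved by induction on `m`.
For the step, `u^(m+1) · (G ∘ V) = u · h`, and Leibniz's rule for the linear factor `u` gives
`(u h)^(m+2) = u h^(m+2) + (m+2) c h^(m+1)`. Differentiating the induction hypothesis once more,
the term in `G^(m+1)` coming from `u h^(m+2)` cancels `(m+2) c h^(m+1)` exactly.
-/

open Complex

/-- The normalized derivative `D = (1/(2πi)) d/dz`. -/
noncomputable def Dop (f : ℂ → ℂ) : ℂ → ℂ :=
  fun z => (1 / (2 * (Real.pi : ℂ) * Complex.I)) * deriv f z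

open Filter Topology

section IterateDeriv

variable {s : Set ℂ} {f : ℂ → ℂ}

theorem DifferentiableOn.iterate_deriv (hf : DifferentiableOn ℂ f s) (hs : IsOpen s) (n : ℕ) :
    DifferentiableOn ℂ (_root_.deriv^[n] f) s := by
  induction n with
  | zero => exact hf
  | succ n ih => rw [Function.iterate_succ']; exact ih.deriv hs

theorem iter_deriv_linear_mul (hf : DifferentiableOn ℂ f s) (hs : IsOpen s) (c d : ℂ)
    (n : ℕ) {z : ℂ} (hz : z ∈ s) :
    deriv^[n + 1] (fun w => (c * w + d) * f w) z =
      (c * z + d) * deriv^[n + 1] f z + (n + 1) * c * deriv^[n] f z := by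
  have hlin : ∀ z, HasDerivAt (fun w => c * w + d) c z := fun z => by
    simpa using ((hasDerivAt_id z).const_mul c).add_const d
  have hdiff (k : ℕ) {z : ℂ} (hz : z ∈ s) : DifferentiableAt ℂ (deriv^[k] f) z :=
    (hf.iterate_deriv hs k).differentiableAt (hs.mem_nhds hz)
  induction n generalizing z with
  | zero =>
    simp only [zero_add, Function.iterate_one, Function.iterate_zero_apply, Nat.cast_zero]
    rw [((hlin z).fun_mul (hf.differentiableAt (hs.mem_nhds hz)).hasDerivAt).deriv]
    ring
  | succ n ih =>
    have hih : deriv^[n + 1] (fun w => (c * w + d) * f w) =ᶠ[𝓝 z]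
        fun w => (c * w + d) * deriv^[n + 1] f w + (n + 1) * c * deriv^[n] f w :=
      eventually_of_mem (hs.mem_nhds hz) fun w hw => ih hw
    rw [Function.iterate_succ_apply', hih.deriv_eq,
      (((hlin z).fun_mul (hdiff (n + 1) hz).hasDerivAt).fun_add
        ((hdiff n hz).hasDerivAt.const_mul _)).deriv,
      Function.iterate_succ_apply' _ (n + 1), ← Function.iterate_succ_apply' deriv n]
    push_cast
    ring

end IterateDeriv

theorem hasDerivAt_mobius {a b c d z : ℂ} (hz : c * z + d ≠ 0) :
    HasDerivAt (fun w => (a * w + b) / (c * w + d)) ((a * d - b * c) / (c * z + d) ^ 2) z := by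
  have hlin (p q : ℂ) : HasDerivAt (fun w => p * w + q) p z := by
    simpa using ((hasDerivAt_id z).const_mul p).add_const q
  exact ((hlin a b).div (hlin c d) hz).congr_deriv (by ring)

theorem im_mobius (a b c d : ℝ) (z : ℂ) :
    ((a * z + b) / (c * z + d) : ℂ).im = (a * d - b * c) * z.im / normSq (c * z + d) := by
  rw [div_im, ← sub_div]
  congr 1
  simp only [add_im, add_re, mul_im, mul_re, ofReal_re, ofReal_im]
  ring

theorem ofReal_mul_add_ofReal_ne_zero {c d : ℝ} (hcd : c ≠ 0 ∨ d ≠ 0) {z : ℂ} (hz : 0 < z.im) :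
    (c : ℂ) * z + d ≠ 0 := by
  intro h
  have hc : c = 0 := by simpa [hz.ne'] using congrArg im h
  have hd : d = 0 := by simpa [hc] using congrArg re h
  exact hcd.elim (· hc) (· hd)

theorem Dop_iterate_apply (n : ℕ) (f : ℂ → ℂ) (z : ℂ) :
    Dop^[n] f z = (1 / (2 * Real.pi * I)) ^ n * deriv^[n] f z := by
  induction n generalizing z with
  | zero => simp
  | succ n ih =>
    rw [Function.iterate_succ_apply', Function.iterate_succ_apply']
    simp only [Dop, funext ih, deriv_const_mul_field', pow_succ]
    ring

section Bol

variable {a b c d : ℂ} {s t : Set ℂ}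

theorem hasDerivAt_comp_mobius (hdet : a * d - b * c = 1) {G : ℂ → ℂ} {z : ℂ}
    (hz : c * z + d ≠ 0) (hG : DifferentiableAt ℂ G ((a * z + b) / (c * z + d))) :
    HasDerivAt (fun w => G ((a * w + b) / (c * w + d)))
      (deriv G ((a * z + b) / (c * z + d)) / (c * z + d) ^ 2) z :=
  (hG.hasDerivAt.comp z (hasDerivAt_mobius hz)).congr_deriv (by rw [hdet, mul_one_div])

theorem iter_deriv_pow_mul_comp_mobius (hdet : a * d - b * c = 1) (hs : IsOpen s)
    (ht : IsOpen t) (hu : ∀ w ∈ s, c * w + d ≠ 0)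
    (hst : Set.MapsTo (fun w => (a * w + b) / (c * w + d)) s t) {G : ℂ → ℂ}
    (hG : DifferentiableOn ℂ G t) (m : ℕ) {z : ℂ} (hz : z ∈ s) :
    deriv^[m + 1] (fun w => (c * w + d) ^ m * G ((a * w + b) / (c * w + d))) z =
      deriv^[m + 1] G ((a * z + b) / (c * z + d)) / (c * z + d) ^ (m + 2) := by
  have hcomp {H : ℂ → ℂ} (hH : DifferentiableOn ℂ H t) {z : ℂ} (hz : z ∈ s) :=
    hasDerivAt_comp_mobius hdet (hu z hz) (hH.differentiableAt (ht.mem_nhds (hst hz)))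
  induction m generalizing z with
  | zero => simpa using (hcomp hG hz).deriv
  | succ m ih =>
    set h := fun w => (c * w + d) ^ m * G ((a * w + b) / (c * w + d))
    have hh : DifferentiableOn ℂ h s := fun w hw =>
      ((differentiableAt_id.const_mul c |>.add_const d |>.pow m).mul
        (hcomp hG hw).differentiableAt).differentiableWithinAt
    have hih : deriv^[m + 1] h =ᶠ[𝓝 z]
        fun w => deriv^[m + 1] G ((a * w + b) / (c * w + d)) / (c * w + d) ^ (m + 2) :=
      eventually_of_mem (hs.mem_nhds hz) fun w hw => ih hw
    have hpow : HasDerivAt (fun w => (c * w + d) ^ (m + 2))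
        ((m + 2 : ℕ) * (c * z + d) ^ (m + 1) * c) z := by
      simpa using (((hasDerivAt_id z).const_mul c).add_const d).fun_pow (m + 2)
    have hquot := (hcomp (hG.iterate_deriv ht (m + 1)) hz).fun_div hpow (pow_ne_zero _ (hu z hz))
    have hsplit : (fun w => (c * w + d) ^ (m + 1) * G ((a * w + b) / (c * w + d))) =
        fun w => (c * w + d) * h w := by
      funext w; simp only [h]; ring
    rw [hsplit, iter_deriv_linear_mul hh hs c d (m + 1) hz, ih hz,
      Function.iterate_succ_apply' _ (m + 1) h, hih.deriv_eq, hquot.deriv,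
      Function.iterate_succ_apply' _ (m + 1) G]
    have hu_z := hu z hz
    field_simp
    push_cast
    ring

end Bol

theorem bol_identity_general (k : ℕ) (hk : 2 ≤ k) (F : ℂ → ℂ)
    (hF : DifferentiableOn ℂ F {z : ℂ | 0 < z.im})
    (a b c d : ℝ) (hV : a * d - b * c = 1)
    (z : ℂ) (hz : 0 < z.im) :
    (Dop^[k - 1] F) (((a : ℂ) * z + b) / ((c : ℂ) * z + d)) / ((c : ℂ) * z + d) ^ k =
      (Dop^[k - 1]
        (fun w => ((c : ℂ) * w + d) ^ (k - 2) * F (((a : ℂ) * w + b) / ((c : ℂ) * w + d)))) z := by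
  obtain ⟨m, rfl⟩ : ∃ m, k = m + 2 := ⟨k - 2, by omega⟩
  have hcd : c ≠ 0 ∨ d ≠ 0 := by
    by_contra! h
    simp [h.1, h.2] at hV
  have hdet : (a : ℂ) * d - b * c = 1 := by exact_mod_cast hV
  have hmaps : Set.MapsTo (fun w : ℂ => (a * w + b) / (c * w + d))
      UpperHalfPlane.upperHalfPlaneSet UpperHalfPlane.upperHalfPlaneSet := fun w hw => by
    simp only [Set.mem_ofPred_eq, im_mobius, hV, one_mul] at hw ⊢
    exact div_pos hw (normSq_pos.mpr (ofReal_mul_add_ofReal_ne_zero hcd hw))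
  simp only [show m + 2 - 1 = m + 1 by omega, show m + 2 - 2 = m by omega, Dop_iterate_apply,
    iter_deriv_pow_mul_comp_mobius hdet UpperHalfPlane.isOpen_upperHalfPlaneSet
      UpperHalfPlane.isOpen_upperHalfPlaneSet (fun w hw => ofReal_mul_add_ofReal_ne_zero hcd hw)
      hmaps hF m hz]
  ring

theorem bol_identity (k : ℕ) (hk : 2 ≤ k) (F : ℂ → ℂ)
    (hF : DifferentiableOn ℂ F {z : ℂ | 0 < z.im})
    (a b c d : ℝ) (hV : a * d - b * c = 1)
    (z : ℂ) (hz : 0 < z.im) (hcd : (c : ℂ) * z + d ≠ 0) :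
    (Dop^[k - 1] F) (((a : ℂ) * z + b) / ((c : ℂ) * z + d)) / ((c : ℂ) * z + d) ^ k =
      (Dop^[k - 1]
        (fun w => ((c : ℂ) * w + d) ^ (k - 2) * F (((a : ℂ) * w + b) / ((c : ℂ) * w + d)))) z :=
  bol_identity_general k hk F hF a b c d hV z hz
end

section
/- For m ≥ 0, every nonreal complex zero of the Ramanujan polynomial R_{2m+1}(z) = Σ_{n=0}^{m+1} (B_{2n}/(2n)!)(B_{2m−2n+2}/(2m−2n+2)!) z^{2n} lies on the unit circle |z| = 1. -/
/-- The Ramanujan polynomial `R_{2m+1}`. -/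
noncomputable def ramanujanPoly (m : ℕ) (z : ℂ) : ℂ :=
  ∑ n ∈ Finset.range (m + 2),
    (bernoulli (2 * n) : ℂ) / (Nat.factorial (2 * n) : ℂ) *
      ((bernoulli (2 * m + 2 - 2 * n) : ℂ) / (Nat.factorial (2 * m + 2 - 2 * n) : ℂ)) *
      z ^ (2 * n)

/-!
Write `β n = B_{2n} / (2n)!`, so that `R_{2m+1}(z) = ∑ β_n β_{m+1-n} z^{2n}` has degree `2m+2`
and palindromic coefficients. By Euler's formula `ζ(2n) = (-1)^(n+1) (2π)^(2n) β_n / 2` and the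
convolution identity `∑_{j=1}^{m} ζ(2j) ζ(2m+2-2j) = (m + 3/2) ζ(2m+2)` (which comes from the
Riccati equation satisfied by the generating function `x / (eˣ - 1)`), on the unit circle
`R(e^{iθ}) = e^{i(m+1)θ} G(θ)` with `G` real of sign `(-1)^(m+k)` at `θ = kπ/(m+1)`,
`1 ≤ k ≤ m`. This gives `m - 1` zeros on the open upper half circle, and their inverses on the
lower one. With the four real zeros `±r, ±1/r`, found from `R(0) R(1) < 0` and
`z^{2m+2} R(1/z) = R(z)`, these are `2m+2` distinct zeros, hence all of them.
For `m = 0`, `R_1(z) = (1 + z²)/12`.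
-/

open Finset
open scoped Nat

section BernoulliConvolution

open PowerSeries

theorem bernoulliPowerSeries_sq (A : Type*) [CommRing A] [Algebra ℚ A] :
    bernoulliPowerSeries A ^ 2 = bernoulliPowerSeries A - X * bernoulliPowerSeries A -
      X * d⁄dX A (bernoulliPowerSeries A) := by
  set B := bernoulliPowerSeries A
  have h := bernoulliPowerSeries_mul_exp_sub_one A
  have h' := congrArg (d⁄dX A) h
  rw [Derivation.leibniz, derivative_X, map_sub, derivative_exp, Derivation.map_one_eq_zero,
    sub_zero, smul_eq_mul, smul_eq_mul] at h'
  linear_combination B * h' - (B + d⁄dX A B) * h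

theorem sum_bernoulli_div_mul_bernoulli_div {N : ℕ} (hN : 2 ≤ N) :
    ∑ k ∈ range (N + 1), bernoulli k / k ! * (bernoulli (N - k) / (N - k)!) =
      (1 - N) * bernoulli N / (N ! : ℚ) - bernoulli (N - 1) / (N - 1)! := by
  obtain ⟨M, rfl⟩ : ∃ M, N = M + 1 := ⟨N - 1, by omega⟩
  have h := congrArg (coeff (M + 1)) (bernoulliPowerSeries_sq ℚ)
  rw [sq, coeff_mul, Nat.sum_antidiagonal_eq_sum_range_succ_mk, map_sub, map_sub,
    coeff_succ_X_mul, coeff_succ_X_mul, coeff_derivative] at h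
  simp only [bernoulliPowerSeries, coeff_mk, Algebra.algebraMap_self, RingHom.id_apply] at h
  rw [h, Nat.add_sub_cancel, Nat.factorial_succ]
  push_cast
  field_simp
  ring

theorem sum_range_two_mul_add_one_of_odd {M : Type*} [AddCommMonoid M] {f : ℕ → M}
    (hf : ∀ k, Odd k → f k = 0) (n : ℕ) :
    ∑ k ∈ range (2 * n + 1), f k = ∑ j ∈ range (n + 1), f (2 * j) := by
  induction n with
  | zero => simp
  | succ n ih =>
    rw [show 2 * (n + 1) + 1 = 2 * n + 1 + 1 + 1 by ring, sum_range_succ, sum_range_succ, ih,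
      hf _ ⟨n, rfl⟩, add_zero, sum_range_succ _ (n + 1)]
    rfl

end BernoulliConvolution

noncomputable def evenBernoulliCoeff (n : ℕ) : ℝ := bernoulli (2 * n) / (2 * n)!

local notation "β" => evenBernoulliCoeff

theorem evenBernoulliCoeff_zero : β 0 = 1 := by simp [evenBernoulliCoeff]

theorem sum_evenBernoulliCoeff_mul {m : ℕ} (hm : m ≠ 0) :
    ∑ j ∈ range (m + 2), β j * β (m + 1 - j) = -(2 * m + 1) * β (m + 1) := by
  have hodd : ∀ k, Odd k →
      bernoulli k / k ! * (bernoulli (2 * m + 2 - k) / (2 * m + 2 - k)!) = 0 := by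
    intro k hk
    rcases eq_or_ne k 1 with rfl | hk1
    · rw [bernoulli_eq_zero_of_odd (n := 2 * m + 2 - 1) ⟨m, by omega⟩ (by omega)]; simp
    · rw [bernoulli_eq_zero_of_odd hk (by obtain ⟨j, rfl⟩ := hk; omega)]; simp
  have h := sum_bernoulli_div_mul_bernoulli_div (N := 2 * (m + 1)) (by omega)
  rw [sum_range_two_mul_add_one_of_odd (by simpa [mul_add] using hodd),
    bernoulli_eq_zero_of_odd (n := 2 * (m + 1) - 1) ⟨m, by omega⟩ (by omega)] at h
  have hsum : ∑ j ∈ range (m + 2), β j * β (m + 1 - j) =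
      ((∑ j ∈ range (m + 1 + 1), bernoulli (2 * j) / (2 * j)! *
        (bernoulli (2 * (m + 1) - 2 * j) / (2 * (m + 1) - 2 * j)!) : ℚ) : ℝ) := by
    push_cast
    refine sum_congr rfl fun j _ => ?_
    rw [evenBernoulliCoeff, evenBernoulliCoeff, Nat.mul_sub]
  rw [hsum, h, evenBernoulliCoeff]
  push_cast
  ring

open Real

-- `zetaEven n = ζ(2n)` for `n ≠ 0`, the junk term `j = 0` being `1 / 0 = 0`.
noncomputable def zetaEven (n : ℕ) : ℝ := ∑' j : ℕ, 1 / (j : ℝ) ^ (2 * n)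

local notation "ζ" => zetaEven

theorem hasSum_zetaEven {n : ℕ} (hn : n ≠ 0) :
    HasSum (fun j : ℕ => 1 / (j : ℝ) ^ (2 * n)) (ζ n) :=
  (hasSum_zeta_nat hn).summable.hasSum

theorem zetaEven_eq {n : ℕ} (hn : n ≠ 0) :
    ζ n = (-1) ^ (n + 1) * (2 * π) ^ (2 * n) / 2 * β n := by
  have h2 : (2 : ℝ) ^ (2 * n) = 2 * 2 ^ (2 * n - 1) := by
    conv_lhs => rw [← Nat.sub_add_cancel (by omega : 1 ≤ 2 * n), pow_succ]
    ring
  rw [zetaEven, (hasSum_zeta_nat hn).tsum_eq, evenBernoulliCoeff, mul_pow, h2]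
  ring

theorem one_le_zetaEven {n : ℕ} (hn : n ≠ 0) : 1 ≤ ζ n := by
  simpa using le_hasSum (hasSum_zetaEven hn) 1 fun j _ => by positivity

theorem zetaEven_le_zetaEven {n k : ℕ} (hn : n ≠ 0) (hnk : n ≤ k) : ζ k ≤ ζ n := by
  refine hasSum_le (fun j => ?_) (hasSum_zetaEven (by omega)) (hasSum_zetaEven hn)
  rcases Nat.eq_zero_or_pos j with rfl | hj
  · simp [zero_pow (by omega : 2 * n ≠ 0), zero_pow (by omega : 2 * k ≠ 0)]
  · gcongr
    exact_mod_cast hj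

theorem evenBernoulliCoeff_ne_zero (n : ℕ) : β n ≠ 0 := by
  rcases eq_or_ne n 0 with rfl | hn
  · simp [evenBernoulliCoeff_zero]
  · intro h
    have := one_le_zetaEven hn
    rw [zetaEven_eq hn, h, mul_zero] at this
    norm_num at this

noncomputable def ramanujanCoeff (m n : ℕ) : ℝ := β n * β (m + 1 - n)

theorem ramanujanCoeff_sub {m n : ℕ} (hn : n ≤ m + 1) :
    ramanujanCoeff m (m + 1 - n) = ramanujanCoeff m n := by
  rw [ramanujanCoeff, ramanujanCoeff, Nat.sub_sub_self hn, mul_comm]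

theorem ramanujanCoeff_self_add_one (m : ℕ) : ramanujanCoeff m (m + 1) = ramanujanCoeff m 0 := by
  simpa using ramanujanCoeff_sub (m := m) (Nat.zero_le _)

theorem ramanujanCoeff_zero (m : ℕ) : ramanujanCoeff m 0 = β (m + 1) := by
  simp [ramanujanCoeff, evenBernoulliCoeff_zero]

theorem ramanujanPoly_eq_sum (m : ℕ) (z : ℂ) :
    ramanujanPoly m z = ∑ n ∈ range (m + 2), (ramanujanCoeff m n : ℂ) * z ^ (2 * n) := by
  refine sum_congr rfl fun n _ => ?_
  rw [show 2 * m + 2 - 2 * n = 2 * (m + 1 - n) by omega, ramanujanCoeff, evenBernoulliCoeff,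
    evenBernoulliCoeff]
  push_cast
  ring

theorem ramanujanPoly_neg (m : ℕ) (z : ℂ) : ramanujanPoly m (-z) = ramanujanPoly m z := by
  simp only [ramanujanPoly, pow_mul, neg_sq]

theorem ramanujanPoly_inv (m : ℕ) {z : ℂ} (hz : z ≠ 0) :
    ramanujanPoly m z⁻¹ = z⁻¹ ^ (2 * m + 2) * ramanujanPoly m z := by
  rw [ramanujanPoly_eq_sum, ramanujanPoly_eq_sum, mul_sum, ← sum_range_reflect]
  refine sum_congr rfl fun n hn => ?_
  have hn : n ≤ m + 1 := by have := mem_range.1 hn; omega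
  rw [show m + 2 - 1 - n = m + 1 - n by omega, ramanujanCoeff_sub hn,
    show 2 * m + 2 = 2 * n + 2 * (m + 1 - n) by omega, pow_add, inv_pow z (2 * (m + 1 - n))]
  field_simp
  simp [hz]

-- Euler's formula turns the rescaled coefficients into products of even zeta values.
theorem ramanujanCoeff_zero_eq_zetaEven (m : ℕ) :
    (-1) ^ m * (2 * π) ^ (2 * m + 2) / 4 * ramanujanCoeff m 0 = ζ (m + 1) / 2 := by
  rw [ramanujanCoeff_zero, zetaEven_eq (by omega : m + 1 ≠ 0)]
  ring

theorem ramanujanCoeff_succ_eq_zetaEven {m j : ℕ} (hj : j < m) :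
    (-1) ^ m * (2 * π) ^ (2 * m + 2) / 4 * ramanujanCoeff m (j + 1) =
      -(ζ (j + 1) * ζ (m - j)) := by
  obtain ⟨i, rfl⟩ : ∃ i, m = j + 1 + i := ⟨m - j - 1, by omega⟩
  rw [ramanujanCoeff, show j + 1 + i + 1 - (j + 1) = i + 1 by omega,
    show j + 1 + i - j = i + 1 by omega, zetaEven_eq j.add_one_ne_zero,
    zetaEven_eq i.add_one_ne_zero]
  ring

theorem sum_zetaEven_mul_zetaEven {m : ℕ} (hm : m ≠ 0) :
    ∑ j ∈ range m, ζ (j + 1) * ζ (m - j) = (m + 3 / 2) * ζ (m + 1) := by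
  have h : ∑ j ∈ range (m + 2), ramanujanCoeff m j = -(2 * m + 1) * ramanujanCoeff m 0 := by
    rw [ramanujanCoeff_zero]
    exact sum_evenBernoulliCoeff_mul hm
  rw [sum_range_succ, sum_range_succ', ramanujanCoeff_self_add_one] at h
  have hmid : ∑ j ∈ range m, ζ (j + 1) * ζ (m - j) =
      -((-1) ^ m * (2 * π) ^ (2 * m + 2) / 4 * ∑ j ∈ range m, ramanujanCoeff m (j + 1)) := by
    rw [mul_sum, ← sum_neg_distrib]
    exact sum_congr rfl fun j hj => by
      rw [ramanujanCoeff_succ_eq_zetaEven (mem_range.1 hj), neg_neg]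
  rw [hmid]
  linear_combination (-(-1) ^ m * (2 * π) ^ (2 * m + 2) / 4) * h +
    (2 * m + 3) * ramanujanCoeff_zero_eq_zetaEven m

theorem sum_ofReal_mul_exp_eq_ofReal_sum_mul_cos {N : ℕ} {a : ℕ → ℝ}
    (ha : ∀ n ≤ N, a (N - n) = a n) (θ : ℝ) :
    ∑ n ∈ range (N + 1), (a n : ℂ) * Complex.exp (((2 * n - N) * θ : ℝ) * Complex.I) =
      ((∑ n ∈ range (N + 1), a n * cos ((2 * n - N) * θ) : ℝ) : ℂ) := by
  -- the reflection `n ↦ N - n` fixes the coefficients and negates the sines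
  have hsin : ∑ n ∈ range (N + 1), a n * sin ((2 * n - N) * θ) = 0 := by
    have hrefl : ∑ n ∈ range (N + 1),
        a (N + 1 - 1 - n) * sin ((2 * (N + 1 - 1 - n : ℕ) - N) * θ) =
          -∑ n ∈ range (N + 1), a n * sin ((2 * n - N) * θ) := by
      rw [← sum_neg_distrib]
      refine sum_congr rfl fun n hn => ?_
      have hn : n ≤ N := by have := mem_range.1 hn; omega
      rw [Nat.add_sub_cancel, ha n hn, Nat.cast_sub hn, ← mul_neg, ← sin_neg]
      ring_nf
    linarith [sum_range_reflect (fun n : ℕ => a n * sin ((2 * n - N) * θ)) (N + 1)]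
  apply Complex.ext
  · rw [Complex.re_sum, Complex.ofReal_re]
    exact sum_congr rfl fun n _ => by rw [Complex.re_ofReal_mul, Complex.exp_ofReal_mul_I_re]
  · rw [Complex.im_sum, Complex.ofReal_im, ← hsin]
    exact sum_congr rfl fun n _ => by rw [Complex.im_ofReal_mul, Complex.exp_ofReal_mul_I_im]

noncomputable def ramanujanCos (m : ℕ) (θ : ℝ) : ℝ :=
  ∑ n ∈ range (m + 2), ramanujanCoeff m n * cos ((2 * n - (m + 1)) * θ)

theorem ramanujanPoly_exp_mul_I (m : ℕ) (θ : ℝ) :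
    ramanujanPoly m (Complex.exp (θ * Complex.I)) =
      Complex.exp (((m + 1) * θ : ℝ) * Complex.I) * ramanujanCos m θ := by
  have h := sum_ofReal_mul_exp_eq_ofReal_sum_mul_cos (N := m + 1)
    (fun n hn => ramanujanCoeff_sub hn) θ
  rw [Nat.cast_succ] at h
  rw [ramanujanPoly_eq_sum, ramanujanCos, ← h, mul_sum]
  refine sum_congr rfl fun n _ => ?_
  rw [← Complex.exp_nat_mul, mul_left_comm (Complex.exp _), ← Complex.exp_add]
  push_cast
  ring_nf

theorem sum_cos_nat_mul_pi_div_succ {m k : ℕ} (hk : 1 ≤ k) (hkm : k ≤ m) :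
    ∑ j ∈ range m, cos ((2 * j + 1 - m) * (k * π / (m + 1))) = (-1) ^ (k + 1) := by
  set θ := k * π / (m + 1)
  have hθ : 0 < θ ∧ θ < π := by
    constructor
    · positivity
    · rw [div_lt_iff₀ (by positivity)]
      nlinarith [pi_pos, (by exact_mod_cast hkm : (k : ℝ) ≤ m)]
  have hmθ : m * θ = k * π - θ := by
    have : (m + 1) * θ = k * π := by simp only [θ]; field_simp
    linarith
  have h := Real.sin_mul_sum_cos m (2 * θ) ((1 - m) * θ)
  rw [show (m - 1) * (2 * θ) / 2 + (1 - m) * θ = 0 by ring, cos_zero, mul_one,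
    show m * (2 * θ) / 2 = k * π - θ by linarith, sin_nat_mul_pi_sub,
    mul_div_cancel_left₀ θ two_ne_zero] at h
  simp_rw [show ∀ j : ℕ, 2 * θ * j + (1 - m) * θ = (2 * j + 1 - m) * θ by intro j; ring] at h
  rw [show -((-1) ^ k * sin θ) = sin θ * (-1) ^ (k + 1) by ring] at h
  exact mul_left_cancel₀ (sin_pos_of_pos_of_lt_pi hθ.1 hθ.2).ne' h

theorem ramanujanCos_eq_zetaEven (m : ℕ) (θ : ℝ) :
    (-1) ^ m * (2 * π) ^ (2 * m + 2) / 4 * ramanujanCos m θ =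
      ζ (m + 1) * cos ((m + 1) * θ) -
        ∑ j ∈ range m, ζ (j + 1) * ζ (m - j) * cos ((2 * j + 1 - m) * θ) := by
  rw [ramanujanCos, sum_range_succ, sum_range_succ', ramanujanCoeff_self_add_one, mul_add,
    mul_add, mul_sum]
  have hmid : ∑ j ∈ range m,
      (-1) ^ m * (2 * π) ^ (2 * m + 2) / 4 * (ramanujanCoeff m (j + 1) *
        cos ((2 * (j + 1 : ℕ) - (m + 1)) * θ)) =
      -∑ j ∈ range m, ζ (j + 1) * ζ (m - j) * cos ((2 * j + 1 - m) * θ) := by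
    rw [← sum_neg_distrib]
    refine sum_congr rfl fun j hj => ?_
    rw [← mul_assoc, ramanujanCoeff_succ_eq_zetaEven (mem_range.1 hj)]
    push_cast
    ring_nf
  rw [hmid]
  have h0 := ramanujanCoeff_zero_eq_zetaEven m
  have hc1 : cos ((2 * ((0 : ℕ) : ℝ) - (m + 1)) * θ) = cos ((m + 1) * θ) := by
    rw [← cos_neg]; congr 1; push_cast; ring
  have hc2 : cos ((2 * ((m + 1 : ℕ) : ℝ) - (m + 1)) * θ) = cos ((m + 1) * θ) := by
    congr 1; push_cast; ring
  rw [hc1, hc2]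
  linear_combination (2 * cos ((m + 1) * θ)) * h0

theorem abs_sum_zetaEven_mul_sub_mul_le {m : ℕ} (hm : m ≠ 0) {w : ℕ → ℝ}
    (hw : ∀ j, |w j| ≤ 1) :
    |∑ j ∈ range m, (ζ (j + 1) * ζ (m - j) - ζ (m + 1)) * w j| ≤ 3 / 2 * ζ (m + 1) := by
  have hd : ∀ j ∈ range m, 0 ≤ ζ (j + 1) * ζ (m - j) - ζ (m + 1) := by
    intro j hj
    have hj := mem_range.1 hj
    have h1 := zetaEven_le_zetaEven (n := j + 1) (k := m + 1) (by omega) (by omega)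
    have h2 := one_le_zetaEven (n := m - j) (by omega)
    have h3 := one_le_zetaEven (n := j + 1) (by omega)
    nlinarith
  calc |∑ j ∈ range m, (ζ (j + 1) * ζ (m - j) - ζ (m + 1)) * w j|
      ≤ ∑ j ∈ range m, |(ζ (j + 1) * ζ (m - j) - ζ (m + 1)) * w j| :=
        abs_sum_le_sum_abs _ _
    _ ≤ ∑ j ∈ range m, (ζ (j + 1) * ζ (m - j) - ζ (m + 1)) := sum_le_sum fun j hj => by
        rw [abs_mul, abs_of_nonneg (hd j hj)]
        exact mul_le_of_le_one_right (hd j hj) (hw j)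
    _ = 3 / 2 * ζ (m + 1) := by
        rw [sum_sub_distrib, sum_zetaEven_mul_zetaEven hm, sum_const, card_range, nsmul_eq_mul]
        ring

-- Once `ζ(2m+2)` is subtracted from the middle coefficients, the kernel value `(-1)^(k+1)` doubles
-- the extreme term, and the remainder is at most `3/2 ζ(2m+2)` by Euler's convolution identity.
theorem neg_one_pow_mul_ramanujanCos_nat_mul_pi_div_pos {m k : ℕ} (hk : 1 ≤ k)
    (hkm : k ≤ m) :
    0 < (-1) ^ (m + k) * ramanujanCos m (k * π / (m + 1)) := by
  set θ := k * π / (m + 1)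
  set Z := ζ (m + 1)
  have hZ : 0 < Z := one_pos.trans_le (one_le_zetaEven (by omega))
  have hcos : cos ((m + 1) * θ) = (-1) ^ k := by
    rw [show (m + 1) * θ = k * π by simp only [θ]; field_simp, cos_nat_mul_pi]
  set E := ∑ j ∈ range m, (ζ (j + 1) * ζ (m - j) - Z) * cos ((2 * j + 1 - m) * θ)
  have hE : (-1) ^ k * E ≤ 3 / 2 * Z := by
    refine (le_abs_self _).trans ?_
    rw [abs_mul, abs_pow, abs_neg, abs_one, one_pow, one_mul]
    exact abs_sum_zetaEven_mul_sub_mul_le (by omega) fun j => abs_cos_le_one _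
  have hsplit : ∑ j ∈ range m, ζ (j + 1) * ζ (m - j) * cos ((2 * j + 1 - m) * θ) =
      E + Z * (-1) ^ (k + 1) := by
    rw [← sum_cos_nat_mul_pi_div_succ hk hkm, mul_sum, ← sum_add_distrib]
    exact sum_congr rfl fun j _ => by ring
  have heq := ramanujanCos_eq_zetaEven m θ
  rw [hcos, hsplit] at heq
  have hsq : ((-1 : ℝ) ^ k) ^ 2 = 1 := by rw [← pow_mul, pow_mul', neg_one_sq, one_pow]
  have hpos : 0 < (-1) ^ (m + k) * ramanujanCos m θ * ((2 * π) ^ (2 * m + 2) / 4) := by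
    have : (-1) ^ (m + k) * ramanujanCos m θ * ((2 * π) ^ (2 * m + 2) / 4) =
        2 * Z - (-1) ^ k * E := by
      rw [pow_add]
      linear_combination (-1) ^ k * heq + 2 * Z * hsq
    rw [this]
    linarith
  exact pos_of_mul_pos_left hpos (by positivity)

theorem exists_mem_Ioo_eq_zero_of_mul_neg {f : ℝ → ℝ} {a b : ℝ} (hab : a ≤ b)
    (hf : ContinuousOn f (Set.Icc a b)) (h : f a * f b < 0) : ∃ c ∈ Set.Ioo a b, f c = 0 := by
  rcases mul_neg_iff.1 h with ⟨ha, hb⟩ | ⟨ha, hb⟩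
  · exact intermediate_value_Ioo' hab hf ⟨hb, ha⟩
  · exact intermediate_value_Ioo hab hf ⟨ha, hb⟩

theorem exists_strictMono_zeros_of_mul_neg {f : ℝ → ℝ} (hf : Continuous f) {x : ℕ → ℝ}
    (hx : Monotone x) {n : ℕ} (hsign : ∀ k < n, f (x k) * f (x (k + 1)) < 0) :
    ∃ τ : Fin n → ℝ, StrictMono τ ∧
      ∀ k : Fin n, τ k ∈ Set.Ioo (x k) (x (k + 1 : ℕ)) ∧ f (τ k) = 0 := by
  have h (k : Fin n) : ∃ t ∈ Set.Ioo (x k) (x (k + 1 : ℕ)), f t = 0 :=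
    exists_mem_Ioo_eq_zero_of_mul_neg (hx k.val.le_succ) hf.continuousOn (hsign k k.isLt)
  choose τ hτ hτ0 using h
  refine ⟨τ, fun j k hjk => ?_, fun k => ⟨hτ k, hτ0 k⟩⟩
  calc τ j < x (j + 1 : ℕ) := (hτ j).2
    _ ≤ x k := hx (Nat.succ_le_of_lt hjk)
    _ < τ k := (hτ k).1

theorem continuous_ramanujanCos (m : ℕ) : Continuous (ramanujanCos m) := by
  unfold ramanujanCos
  fun_prop

theorem exists_upper_unit_circle_roots_ramanujanPoly (m : ℕ) :
    ∃ U : Finset ℂ, U.card = m - 1 ∧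
      ∀ w ∈ U, ramanujanPoly m w = 0 ∧ 0 < w.im ∧ ‖w‖ = 1 := by
  set x : ℕ → ℝ := fun k => ((k + 1 : ℕ) : ℝ) * π / (m + 1)
  have hx : Monotone x := fun i j hij => by
    simp only [x]
    gcongr
  have hsign : ∀ k < m - 1, ramanujanCos m (x k) * ramanujanCos m (x (k + 1)) < 0 := by
    intro k hk
    have h1 := neg_one_pow_mul_ramanujanCos_nat_mul_pi_div_pos (m := m) (k := k + 1)
      (by omega) (by omega)
    have h2 := neg_one_pow_mul_ramanujanCos_nat_mul_pi_div_pos (m := m) (k := k + 1 + 1)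
      (by omega) (by omega)
    have hs : ((-1 : ℝ) ^ (m + (k + 1))) ^ 2 = 1 := by
      rw [← pow_mul, pow_mul', neg_one_sq, one_pow]
    have h3 := mul_pos h1 h2
    rw [← add_assoc m (k + 1) 1, pow_succ] at h3
    linear_combination h3 - ramanujanCos m (x k) * ramanujanCos m (x (k + 1)) * hs
  obtain ⟨τ, hτmono, hτ⟩ :=
    exists_strictMono_zeros_of_mul_neg (continuous_ramanujanCos m) hx hsign
  have hτπ : ∀ k, τ k ∈ Set.Ioo 0 π := fun k => by
    have hx0 : 0 < x k := by simp only [x]; positivity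
    refine ⟨hx0.trans (hτ k).1.1, (hτ k).1.2.trans ?_⟩
    simp only [x]
    rw [div_lt_iff₀ (by positivity)]
    have : ((k + 1 + 1 : ℕ) : ℝ) < m + 1 := by
      have := k.isLt
      exact_mod_cast (by omega : k + 1 + 1 < m + 1)
    nlinarith [pi_pos]
  refine ⟨univ.image fun k => Complex.exp (τ k * Complex.I), ?_, ?_⟩
  · rw [card_image_of_injective, card_univ, Fintype.card_fin]
    intro j k hjk
    have hcos := congrArg Complex.re hjk
    simp only [Complex.exp_ofReal_mul_I_re] at hcos
    exact hτmono.injective (injOn_cos (Set.Ioo_subset_Icc_self (hτπ j))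
      (Set.Ioo_subset_Icc_self (hτπ k)) hcos)
  · simp only [mem_image, mem_univ, true_and, forall_exists_index, forall_apply_eq_imp_iff]
    intro k
    refine ⟨?_, ?_, Complex.norm_exp_ofReal_mul_I _⟩
    · rw [ramanujanPoly_exp_mul_I, (hτ k).2, Complex.ofReal_zero, mul_zero]
    · rw [Complex.exp_ofReal_mul_I_im]
      exact sin_pos_of_pos_of_lt_pi (hτπ k).1 (hτπ k).2

theorem exists_unit_circle_roots_ramanujanPoly (m : ℕ) :
    ∃ C : Finset ℂ, C.card = 2 * (m - 1) ∧
      ∀ w ∈ C, ramanujanPoly m w = 0 ∧ w.im ≠ 0 ∧ ‖w‖ = 1 := by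
  obtain ⟨U, hUcard, hU⟩ := exists_upper_unit_circle_roots_ramanujanPoly m
  have hinv : ∀ w ∈ U.image (·⁻¹), ramanujanPoly m w = 0 ∧ w.im < 0 ∧ ‖w‖ = 1 := by
    simp only [mem_image, forall_exists_index, and_imp, forall_apply_eq_imp_iff₂]
    intro w hw
    obtain ⟨hroot, him, hnorm⟩ := hU w hw
    have hw0 : w ≠ 0 := norm_ne_zero_iff.1 (by rw [hnorm]; exact one_ne_zero)
    refine ⟨by rw [ramanujanPoly_inv m hw0, hroot, mul_zero], ?_,
      by rw [norm_inv, hnorm, inv_one]⟩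
    rw [Complex.inv_im]
    exact div_neg_of_neg_of_pos (neg_neg_of_pos him) (Complex.normSq_pos.2 hw0)
  refine ⟨U ∪ U.image (·⁻¹), ?_, ?_⟩
  · rw [card_union_of_disjoint, card_image_of_injective _ inv_injective, hUcard, two_mul]
    exact disjoint_left.2 fun w hw hw' => (hU w hw).2.1.not_gt (hinv w hw').2.1
  · intro w hw
    rcases mem_union.1 hw with hw | hw
    · exact ⟨(hU w hw).1, (hU w hw).2.1.ne', (hU w hw).2.2⟩
    · exact ⟨(hinv w hw).1, (hinv w hw).2.1.ne, (hinv w hw).2.2⟩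

theorem ramanujanPoly_ofReal (m : ℕ) (x : ℝ) :
    ramanujanPoly m x =
      ((∑ n ∈ range (m + 2), ramanujanCoeff m n * x ^ (2 * n) : ℝ) : ℂ) := by
  rw [ramanujanPoly_eq_sum]
  push_cast
  rfl

theorem exists_ramanujanPoly_eq_zero_mem_Ioo {m : ℕ} (hm : m ≠ 0) :
    ∃ r ∈ Set.Ioo (0 : ℝ) 1, ramanujanPoly m r = 0 := by
  set f : ℝ → ℝ := fun x => ∑ n ∈ range (m + 2), ramanujanCoeff m n * x ^ (2 * n)
  have hf0 : f 0 = β (m + 1) := by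
    simp [f, sum_range_succ', ramanujanCoeff_zero]
  have hf1 : f 1 = -(2 * m + 1) * β (m + 1) := by
    simpa [f, ramanujanCoeff] using sum_evenBernoulliCoeff_mul hm
  have hsign : f 0 * f 1 < 0 := by
    rw [hf0, hf1]
    nlinarith [sq_pos_of_ne_zero (evenBernoulliCoeff_ne_zero (m + 1))]
  obtain ⟨r, hr, hfr⟩ := exists_mem_Ioo_eq_zero_of_mul_neg zero_le_one (by fun_prop) hsign
  exact ⟨r, hr, by rw [ramanujanPoly_ofReal]; exact_mod_cast hfr⟩

theorem exists_four_real_roots_ramanujanPoly {m : ℕ} (hm : m ≠ 0) :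
    ∃ A : Finset ℂ, A.card = 4 ∧ ∀ w ∈ A, ramanujanPoly m w = 0 ∧ w.im = 0 := by
  obtain ⟨r, ⟨hr0, hr1⟩, hr⟩ := exists_ramanujanPoly_eq_zero_mem_Ioo hm
  have hr' : 1 < r⁻¹ := one_lt_inv_iff₀.2 ⟨hr0, hr1⟩
  have hrinv : ramanujanPoly m (r : ℂ)⁻¹ = 0 := by
    rw [ramanujanPoly_inv m (by exact_mod_cast hr0.ne'), hr, mul_zero]
  refine ⟨({r, -r, r⁻¹, -r⁻¹} : Finset ℝ).image (↑), ?_, ?_⟩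
  · rw [card_image_of_injective _ Complex.ofReal_injective, card_insert_of_notMem, card_insert_of_notMem, card_pair]
    all_goals
      simp only [ne_eq, mem_insert, mem_singleton, not_or]
      repeat' constructor
    all_goals intro h; linarith
  · simp only [mem_image, mem_insert, mem_singleton, forall_exists_index, and_imp]
    rintro w x hx rfl
    refine ⟨?_, Complex.ofReal_im x⟩
    rcases hx with rfl | rfl | rfl | rfl <;> push_cast <;> simp [ramanujanPoly_neg, hr, hrinv]

section Polynomial

open Polynomial

theorem Polynomial.mem_of_isRoot_of_natDegree_le_card {R : Type*} [CommRing R] [IsDomain R]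
    {p : R[X]} (hp : p ≠ 0) {S : Finset R} (hS : ∀ x ∈ S, p.IsRoot x)
    (hcard : p.natDegree ≤ S.card) {z : R} (hz : p.IsRoot z) : z ∈ S := by
  classical
  by_contra hzS
  have hsub : (insert z S).val ⊆ p.roots := fun x hx => by
    rw [mem_roots hp]
    rcases mem_insert.1 hx with rfl | hx
    exacts [hz, hS x hx]
  have := card_le_degree_of_subset_roots hsub
  rw [card_insert_of_notMem hzS] at this
  omega

noncomputable def ramanujanPolynomial (m : ℕ) : ℂ[X] :=
  ∑ n ∈ range (m + 2), C (ramanujanCoeff m n : ℂ) * X ^ (2 * n)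

theorem eval_ramanujanPolynomial (m : ℕ) (z : ℂ) :
    (ramanujanPolynomial m).eval z = ramanujanPoly m z := by
  simp [ramanujanPolynomial, eval_finsetSum, ramanujanPoly_eq_sum]

theorem natDegree_ramanujanPolynomial_le (m : ℕ) :
    (ramanujanPolynomial m).natDegree ≤ 2 * m + 2 :=
  natDegree_sum_le_of_forall_le _ _ fun n hn =>
    (natDegree_C_mul_X_pow_le _ _).trans (by have := mem_range.1 hn; omega)

theorem ramanujanPolynomial_ne_zero (m : ℕ) : ramanujanPolynomial m ≠ 0 := by
  intro h
  have hc := congrArg (coeff · (2 * (m + 1))) h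
  simp only [ramanujanPolynomial, finsetSum_coeff, coeff_C_mul_X_pow, coeff_zero] at hc
  rw [sum_eq_single (m + 1) (fun n _ hn => if_neg (by omega))
    (fun h => absurd (mem_range.2 (by omega)) h), if_pos rfl, Complex.ofReal_eq_zero,
    ramanujanCoeff_self_add_one, ramanujanCoeff_zero] at hc
  exact evenBernoulliCoeff_ne_zero _ hc

end Polynomial

theorem mem_of_ramanujanPoly_eq_zero {m : ℕ} {S : Finset ℂ}
    (hS : ∀ w ∈ S, ramanujanPoly m w = 0)
    (hcard : 2 * m + 2 ≤ S.card) {z : ℂ} (hz : ramanujanPoly m z = 0) : z ∈ S := by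
  refine Polynomial.mem_of_isRoot_of_natDegree_le_card (ramanujanPolynomial_ne_zero m)
    (fun w hw => ?_) ((natDegree_ramanujanPolynomial_le m).trans hcard) ?_
  · rw [Polynomial.IsRoot, eval_ramanujanPolynomial, hS w hw]
  · rw [Polynomial.IsRoot, eval_ramanujanPolynomial, hz]

theorem ramanujanPoly_zero_left (z : ℂ) : ramanujanPoly 0 z = (1 + z ^ 2) / 12 := by
  simp [ramanujanPoly, sum_range_succ, bernoulli_two]
  ring

theorem norm_eq_one_of_ramanujanPoly_zero_left_eq_zero {z : ℂ} (hz : ramanujanPoly 0 z = 0) :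
    ‖z‖ = 1 := by
  rw [ramanujanPoly_zero_left, div_eq_zero_iff, add_eq_zero_iff_neg_eq] at hz
  have h := congrArg norm (hz.resolve_right (by norm_num))
  rw [norm_neg, norm_one, norm_pow] at h
  exact (pow_eq_one_iff_of_nonneg (norm_nonneg z) two_ne_zero).1 h.symm

theorem ramanujanPoly_nonreal_zeros_on_unit_circle (m : ℕ) (z : ℂ)
    (hroot : ramanujanPoly m z = 0) (hnonreal : z.im ≠ 0) :
    ‖z‖ = 1 := by
  rcases eq_or_ne m 0 with rfl | hm
  · exact norm_eq_one_of_ramanujanPoly_zero_left_eq_zero hroot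
  obtain ⟨A, hAcard, hA⟩ := exists_four_real_roots_ramanujanPoly hm
  obtain ⟨C, hCcard, hC⟩ := exists_unit_circle_roots_ramanujanPoly m
  have hAC : Disjoint A C := disjoint_left.2 fun w hwA hwC => (hC w hwC).2.1 (hA w hwA).2
  have hz : z ∈ A ∪ C := by
    refine mem_of_ramanujanPoly_eq_zero (fun w hw => ?_) ?_ hroot
    · rcases mem_union.1 hw with hw | hw
      exacts [(hA w hw).1, (hC w hw).1]
    · rw [card_union_of_disjoint hAC, hAcard, hCcard]
      omega
  rcases mem_union.1 hz with hzA | hzC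
  · exact absurd (hA z hzA).2 hnonreal
  · exact (hC z hzC).2.2
end
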